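/- arXiv:1303.5510 — 2 statements merged into one kernel-verified Lean document; each statement's English description precedes it below -/
import Mathlib

section
/- Consider the αz-map with z < -1 and α > 0: xₙ₊₁ = (xₙ + α·yₙᶻ) mod 1, yₙ₊₁ = yₙ + sgn(xₙ₊₁ - 1/2). If the initial action y₀ is a positive integer large enough that α·∑_{n=y₀}^{∞} nᶻ < 1/4, and the initial angle satisfies 1/2 < x₀ < 3/4, then for all n ≥ 0 the angle stays in (1/2, 1) and the action satisfies yₙ = y₀ + n; in particular the orbit escapes to infinity. -/
/-- The αz-map on the cylinder [0,1) × ℤ. -/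
noncomputable def azMap (α z : ℝ) : ℝ × ℤ → ℝ × ℤ := fun p =>
  (Int.fract (p.1 + α * (p.2 : ℝ) ^ z),
   p.2 + if Int.fract (p.1 + α * (p.2 : ℝ) ^ z) > 1/2 then 1 else -1)

theorem stmt_3 (α z : ℝ) (hz : z < -1) (hα : 0 < α)
    (x₀ : ℝ) (y₀ : ℤ) (hy₀ : 0 < y₀)
    (htail : α * (∑' k : ℕ, ((y₀ : ℝ) + (k : ℝ)) ^ z) < 1/4)
    (hx₀ : 1/2 < x₀) (hx₀' : x₀ < 3/4) :
    ∀ n : ℕ,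
      1/2 < ((azMap α z)^[n] (x₀, y₀)).1 ∧
      ((azMap α z)^[n] (x₀, y₀)).1 < 1 ∧
      ((azMap α z)^[n] (x₀, y₀)).2 = y₀ + n := by
  have hy : (1:ℝ) ≤ (y₀:ℝ) := by exact_mod_cast hy₀
  have hpos : ∀ k : ℕ, (0:ℝ) < ((y₀:ℝ) + k) ^ z := by
    intro k
    apply Real.rpow_pos_of_pos
    have : (0:ℝ) ≤ (k:ℝ) := Nat.cast_nonneg k
    linarith
  have hsum : Summable (fun k : ℕ => ((y₀:ℝ) + (k:ℝ)) ^ z) := by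
    have h0 : Summable (fun n : ℕ => (n:ℝ) ^ z) := Real.summable_nat_rpow.2 hz
    have h1 : Summable (fun k : ℕ => ((k:ℝ) + 1) ^ z) := by
      have := (summable_nat_add_iff 1).2 h0
      refine this.congr fun k => ?_
      push_cast; ring_nf
    refine Summable.of_nonneg_of_le (fun k => (hpos k).le) (fun k => ?_) h1
    apply Real.rpow_le_rpow_of_nonpos
    · positivity
    · have : (0:ℝ) ≤ (k:ℝ) := Nat.cast_nonneg k
      linarith
    · linarith
  set S : ℕ → ℝ := fun n => α * ∑ k ∈ Finset.range n, ((y₀:ℝ) + (k:ℝ)) ^ z with hSdef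
  have hS0 : ∀ n, 0 ≤ S n := by
    intro n
    apply mul_nonneg hα.le
    exact Finset.sum_nonneg fun k _ => (hpos k).le
  have hSlt : ∀ n, S n < 1/4 := by
    intro n
    calc S n ≤ α * ∑' k : ℕ, ((y₀:ℝ) + (k:ℝ)) ^ z := by
          apply mul_le_mul_of_nonneg_left _ hα.le
          exact Summable.sum_le_tsum (Finset.range n) (fun k _ => (hpos k).le) hsum
      _ < 1/4 := htail
  have key : ∀ n : ℕ, (azMap α z)^[n] (x₀, y₀) = (x₀ + S n, y₀ + n) := by
    intro n
    induction n with
    | zero => simp [hSdef]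
    | succ n ih =>
      rw [Function.iterate_succ_apply', ih]
      have hx1 : 1/2 < x₀ + S n := by have := hS0 n; linarith
      have hSn1 : S (n+1) = S n + α * ((y₀:ℝ) + (n:ℝ)) ^ z := by
        simp [hSdef, Finset.sum_range_succ]; ring
      have hx2 : x₀ + S (n+1) < 1 := by have := hSlt (n+1); linarith
      have hc : ((y₀ + (n:ℤ) : ℤ) : ℝ) = (y₀:ℝ) + (n:ℝ) := by push_cast; ring
      have he : x₀ + S n + α * (((y₀ + (n:ℤ) : ℤ)) : ℝ) ^ z = x₀ + S (n+1) := by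
        rw [hc, hSn1]; ring
      have hfr : Int.fract (x₀ + S n + α * (((y₀ + (n:ℤ) : ℤ)) : ℝ) ^ z)
          = x₀ + S (n+1) := by
        rw [he]
        refine Int.fract_eq_self.2 ⟨?_, hx2⟩
        have := hS0 (n+1); linarith
      have hgt : x₀ + S (n+1) > 1/2 := by
        have h1 : S n ≤ S (n+1) := by
          rw [hSn1]
          have := hpos n
          nlinarith
        linarith
      simp only [azMap]
      rw [hfr]
      rw [if_pos hgt]
      simp [Prod.ext_iff]; ring
  intro n
  rw [key n]
  have := hS0 n
  have := hSlt n
  refine ⟨by simp; linarith, by simp; linarith, by simp⟩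
end

section
/- First return action change bound (Lemma 1 of the pinball paper): let α > 0, I ≥ 3 an integer, φ ∈ (0, α/(I-1)), and let n, n' ≥ 0 be the unique integers satisfying φ + α∑_{k=0}^{n} 1/(I+k) < 1 < φ + α∑_{k=0}^{n+1} 1/(I+k) and 2 - α/(I+n-n'-1) < φ + α∑_{k=0}^{n}1/(I+k) + α∑_{k=0}^{n'}1/(I+n-k) + α/(I+n+1) < 2. Then |n - n'| ≤ 1. -/
lemma ico_sum (a : ℤ) (m : ℕ) (f : ℤ → ℝ) :
    ∑ x ∈ Finset.Ico a (a + (m:ℤ)), f x = ∑ k ∈ Finset.range m, f (a + k) := by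
  rw [Int.Ico_eq_finset_map, Finset.sum_map]
  rw [show a + (m:ℤ) - a = (m:ℤ) by ring, Int.toNat_natCast]
  rfl

theorem stmt_8 (α : ℝ) (hα : 0 < α) (I : ℤ) (hI : 3 ≤ I) (φ : ℝ)
    (hφ0 : 0 < φ) (hφ1 : φ < α / ((I : ℝ) - 1)) (n n' : ℕ)
    (h1 : φ + α * (∑ k ∈ Finset.range (n + 1), 1 / ((I : ℝ) + k)) < 1)
    (h2 : 1 < φ + α * (∑ k ∈ Finset.range (n + 2), 1 / ((I : ℝ) + k)))
    (h3 : 2 - α / ((I : ℝ) + n - n' - 1) <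
          φ + α * (∑ k ∈ Finset.range (n + 1), 1 / ((I : ℝ) + k))
            + α * (∑ k ∈ Finset.range (n' + 1), 1 / ((I : ℝ) + n - k))
            + α / ((I : ℝ) + n + 1))
    (h4 : φ + α * (∑ k ∈ Finset.range (n + 1), 1 / ((I : ℝ) + k))
            + α * (∑ k ∈ Finset.range (n' + 1), 1 / ((I : ℝ) + n - k))
            + α / ((I : ℝ) + n + 1) < 2) :
    |(n : ℤ) - (n' : ℤ)| ≤ 1 := by
  set g : ℤ → ℝ := fun x => 1 / (x : ℝ) with hg
  set d : ℤ := I + n - n' with hd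
  set A : ℝ := ∑ x ∈ Finset.Ico I (I + n + 1), g x with hAdef
  set B : ℝ := ∑ x ∈ Finset.Ico d (I + n + 1), g x with hBdef
  -- rewrite the "up" sum
  have hA : (∑ k ∈ Finset.range (n + 1), 1 / ((I : ℝ) + k)) = A := by
    rw [hAdef, show (I:ℤ) + n + 1 = I + ((n+1 : ℕ) : ℤ) by push_cast; ring, ico_sum]
    refine Finset.sum_congr rfl fun k _ => ?_
    simp only [hg]
    push_cast
    ring
  -- rewrite the "down" sum
  have hB : (∑ k ∈ Finset.range (n' + 1), 1 / ((I : ℝ) + n - k)) = B := by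
    rw [hBdef, show (I:ℤ) + n + 1 = d + ((n'+1 : ℕ) : ℤ) by rw [hd]; push_cast; ring, ico_sum]
    rw [← Finset.sum_range_reflect]
    refine Finset.sum_congr rfl fun j hj => ?_
    have hjle : j ≤ n' := by
      simp only [Finset.mem_range] at hj; omega
    simp only [hg, Nat.add_sub_cancel]
    rw [Nat.cast_sub hjle]
    push_cast [hd]
    ring
  rw [hA] at h1
  rw [hA, hB] at h3 h4
  -- split off the extra step in h2
  have h2' : 1 < φ + α * A + α / ((I : ℝ) + n + 1) := by
    rw [Finset.sum_range_succ, hA, mul_add, mul_one_div] at h2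
    push_cast at h2
    rw [show (I:ℝ) + (↑n + 1) = ↑I + ↑n + 1 by ring] at h2
    linarith [h2]
  -- positivity of d - 1
  have hdpos : (0 : ℝ) < (I : ℝ) + n - n' - 1 := by
    have hpos : 0 < α / ((I : ℝ) + n - n' - 1) := by linarith
    rcases lt_trichotomy ((I : ℝ) + n - n' - 1) 0 with h | h | h
    · exact absurd (div_neg_of_pos_of_neg hα h) (by linarith)
    · rw [h, div_zero] at hpos; linarith
    · exact h
  have hd2 : 2 ≤ d := by
    have h' : (1 : ℝ) < (d : ℝ) := by push_cast [hd]; linarith [hdpos]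
    have : (1 : ℤ) < d := by exact_mod_cast h'
    omega
  have hIr : (3:ℝ) ≤ (I:ℝ) := by exact_mod_cast hI
  have hn0 : (0:ℝ) ≤ (n:ℝ) := Nat.cast_nonneg n
  have key1 : (n' : ℤ) ≤ (n : ℤ) + 1 := by
    by_contra hcon
    push_neg at hcon
    have hdle : d ≤ I - 2 := by omega
    have hsplit : (∑ x ∈ Finset.Ico d I, g x) + A = B := by
      rw [hAdef, hBdef,
        ← Finset.sum_union (Finset.Ico_disjoint_Ico_consecutive d I (I + n + 1)),
        Finset.Ico_union_Ico_eq_Ico (by omega) (by omega)]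
    have hne : (I:ℤ) - 2 ≠ I - 1 := by omega
    have hsub : ({I - 2, I - 1} : Finset ℤ) ⊆ Finset.Ico d I := by
      intro x hx
      simp only [Finset.mem_insert, Finset.mem_singleton] at hx
      rcases hx with h | h <;> (rw [Finset.mem_Ico]; omega)
    have hpair : (1:ℝ)/((I:ℝ)-2) + 1/((I:ℝ)-1) ≤ ∑ x ∈ Finset.Ico d I, g x := by
      calc (1:ℝ)/((I:ℝ)-2) + 1/((I:ℝ)-1) = ∑ x ∈ ({I - 2, I - 1} : Finset ℤ), g x := by
            rw [Finset.sum_pair hne]; simp only [hg]; push_cast; ring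
        _ ≤ ∑ x ∈ Finset.Ico d I, g x := by
            apply Finset.sum_le_sum_of_subset_of_nonneg hsub
            intro x hx _
            have hx2 : 2 ≤ x := by have := (Finset.mem_Ico.mp hx).1; omega
            have hx2' : (0:ℝ) < (x:ℝ) := by exact_mod_cast (by omega : (0:ℤ) < x)
            simp only [hg]
            positivity
    have hmul : α * ((1:ℝ)/((I:ℝ)-2) + 1/((I:ℝ)-1)) ≤ α * (∑ x ∈ Finset.Ico d I, g x) :=
      mul_le_mul_of_nonneg_left hpair hα.le
    rw [mul_add, mul_one_div, mul_one_div] at hmul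
    have hBsum : α * B = α * (∑ x ∈ Finset.Ico d I, g x) + α * A := by
      rw [← hsplit]; ring
    have f2 : α / ((I:ℝ) + n + 1) < α / ((I:ℝ) - 2) :=
      div_lt_div_of_pos_left hα (by linarith) (by linarith)
    linarith [h4, h2', hmul, hBsum, f2, hφ1]
  have key2 : (n : ℤ) ≤ (n' : ℤ) + 1 := by
    by_contra hcon
    push_neg at hcon
    have hdge : I + 2 ≤ d := by omega
    have hsplit : (∑ x ∈ Finset.Ico I d, g x) + B = A := by
      rw [hAdef, hBdef,
        ← Finset.sum_union (Finset.Ico_disjoint_Ico_consecutive I d (I + n + 1)),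
        Finset.Ico_union_Ico_eq_Ico (by omega) (by omega)]
    have hne : (I:ℤ) ≠ I + 1 := by omega
    have hsub : ({I, I + 1} : Finset ℤ) ⊆ Finset.Ico I d := by
      intro x hx
      simp only [Finset.mem_insert, Finset.mem_singleton] at hx
      rcases hx with h | h <;> (rw [Finset.mem_Ico]; omega)
    have hpair : (1:ℝ)/(I:ℝ) + 1/((I:ℝ)+1) ≤ ∑ x ∈ Finset.Ico I d, g x := by
      calc (1:ℝ)/(I:ℝ) + 1/((I:ℝ)+1) = ∑ x ∈ ({I, I + 1} : Finset ℤ), g x := by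
            rw [Finset.sum_pair hne]; simp only [hg]; push_cast; ring
        _ ≤ ∑ x ∈ Finset.Ico I d, g x := by
            apply Finset.sum_le_sum_of_subset_of_nonneg hsub
            intro x hx _
            have hx2 : 3 ≤ x := by have := (Finset.mem_Ico.mp hx).1; omega
            have hx2' : (0:ℝ) < (x:ℝ) := by exact_mod_cast (by omega : (0:ℤ) < x)
            simp only [hg]
            positivity
    have hmul : α * ((1:ℝ)/(I:ℝ) + 1/((I:ℝ)+1)) ≤ α * (∑ x ∈ Finset.Ico I d, g x) :=
      mul_le_mul_of_nonneg_left hpair hα.le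
    rw [mul_add, mul_one_div, mul_one_div] at hmul
    have hAsum : α * A = α * (∑ x ∈ Finset.Ico I d, g x) + α * B := by
      rw [← hsplit]; ring
    have hcast : (n':ℝ) + 2 ≤ (n:ℝ) := by exact_mod_cast (by omega : (n':ℤ) + 2 ≤ (n:ℤ))
    have f2 : α / ((I:ℝ) + n - n' - 1) ≤ α / ((I:ℝ) + 1) := by
      apply div_le_div_of_nonneg_left hα.le (by linarith) (by linarith)
    have f3 : α / ((I:ℝ) + n + 1) < α / (I:ℝ) :=
      div_lt_div_of_pos_left hα (by linarith) (by linarith)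
    linarith [h3, h1, hmul, hAsum, f2, f3, hφ0]
  exact abs_le.mpr ⟨by omega, by omega⟩
end
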